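/- On SE(3) with reference point p₀ ∈ ℝ³, mass m > 0 and inertia tensor I (positive definite symmetric 3×3 matrix), the inertia operator A : se(3) → se(3) defined by k(A V, W) = ⟨V,W⟩ for all W (where ⟨V,W⟩ = m⟨V(p₀), W(p₀)⟩ + ⟨ω_V, I ω_W⟩ and k is the Klein form) satisfies: the translational part of A(V) applied at p₀ is I ω_V and the rotational part ω_{A(V)} equals m V(p₀); i.e., A(V)(p₀) = I(ω_V) and ω_{A(V)} = m V(p₀). -/
import Mathlib


open Matrix

noncomputable def jmat (ω : Fin 3 → ℝ) : Matrix (Fin 3) (Fin 3) ℝ :=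
  !![0, -ω 2, ω 1; ω 2, 0, -ω 0; -ω 1, ω 0, 0]

/-- Action of `V = [[j(ω),v],[0,0]] ∈ se(3)` on a point: `V(p) = ω × p + v`. -/
noncomputable def se3act (ω v p : Fin 3 → ℝ) : Fin 3 → ℝ :=
  crossProduct ω p + v

/-- The Klein form in components: `k(V,W) = ⟨v, ω_W⟩ + ⟨w, ω_V⟩`. -/
def kleinc (ωV v ωW w : Fin 3 → ℝ) : ℝ := v ⬝ᵥ ωW + w ⬝ᵥ ωV

/-- Kinetic inner product: `⟨V,W⟩ = m⟨V(p₀),W(p₀)⟩ + ⟨ω_V, I ω_W⟩`. -/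
noncomputable def kinForm (m : ℝ) (I : Matrix (Fin 3) (Fin 3) ℝ)
    (p₀ : Fin 3 → ℝ) (ωV v ωW w : Fin 3 → ℝ) : ℝ :=
  m * (se3act ωV v p₀ ⬝ᵥ se3act ωW w p₀) + ωV ⬝ᵥ (I *ᵥ ωW)

/-- The inertia operator `A` on `se(3)`, defined by `k(A V, W) = ⟨V, W⟩` for all
`W`, satisfies `A(V)(p₀) = I ω_V` and `ω_{A(V)} = m V(p₀)`. Here `(ωA, vA)` are
the components of `A(V)` for `V = (ω, v)`. -/
theorem inertia_operator_SE3 (m : ℝ) (hm : 0 < m)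
    (I : Matrix (Fin 3) (Fin 3) ℝ) (hsym : Iᵀ = I)
    (hpos : ∀ w : Fin 3 → ℝ, w ≠ 0 → 0 < w ⬝ᵥ (I *ᵥ w))
    (p₀ : Fin 3 → ℝ) (ω v ωA vA : Fin 3 → ℝ)
    (hA : ∀ ωW w : Fin 3 → ℝ,
      kleinc ωA vA ωW w = kinForm m I p₀ ω v ωW w) :
    se3act ωA vA p₀ = I *ᵥ ω ∧ ωA = m • se3act ω v p₀ := by
  constructor
  · funext i
    have h := hA (Pi.single i 1) (-(crossProduct (Pi.single i 1) p₀))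
    have hs : ω ⬝ᵥ (I *ᵥ Pi.single i 1) = (I *ᵥ ω) i := by
      rw [dotProduct_mulVec, ← mulVec_transpose, hsym, dotProduct_single]
      simp [mulVec, dotProduct]
    fin_cases i <;>
      simp [kleinc, kinForm, se3act, crossProduct, dotProduct, Fin.sum_univ_three,
        Pi.single_apply] at h hs ⊢ <;> linarith
  · funext i
    have h := hA 0 (Pi.single i 1)
    fin_cases i <;>
      simp [kleinc, kinForm, se3act, crossProduct, dotProduct, Fin.sum_univ_three,
        Pi.single_apply, mulVec, vecHead, vecTail] at h ⊢ <;> linarith
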